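/- arXiv:2605.02686 — 2 statements merged into one kernel-verified Lean document; each statement's English description precedes it below -/
import Mathlib

section
/- Let z be a point of the hyperbolic plane (the upper half-plane with its hyperbolic metric), let T ≥ 0, and let S be a set of points of the upper half-plane contained in the closed ball of radius T around z, such that any two distinct points of S are at hyperbolic distance at least log 3 from each other. Then S is finite and has cardinality at most 6·e^T. -/
/-! The hyperbolic balls of radius `(log 3) / 2` around the points of `S` are pairwise disjoint
and lie in the ball of radius `T + (log 3) / 2` around `z`. In the upper half-plane a hyperbolic
ball of radius `r` is a Euclidean disk, and integrating the invariant density `dx dy / y²` over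
it, horizontal slice by horizontal slice, gives the area `2π (cosh r - 1)`. Comparing areas
bounds the size of every finite subset of `S` by
`(cosh (T + r) - 1) / (cosh r - 1) ≤ 6 e^T` for `r = (log 3) / 2`. -/

open Metric Set Real MeasureTheory

lemma HasDerivAt.arcsin_of_sqrt_eq {f : ℝ → ℝ} {f' x k : ℝ} (hf : HasDerivAt f f' x)
    (hk : √(1 - f x ^ 2) = k) (hk0 : 0 < k) :
    HasDerivAt (fun y => arcsin (f y)) (f' / k) x := by
  have hne : ∀ a : ℝ, a ^ 2 = 1 → f x ≠ a := by
    rintro a ha rfl; rw [ha, sub_self, sqrt_zero] at hk; exact hk0.ne hk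
  have h := (hasDerivAt_arcsin (hne (-1) (by norm_num)) (hne 1 (by norm_num))).comp x hf
  rwa [hk, one_div_mul_eq_div] at h

noncomputable def antiderivSqrtDivSq (c ρ u : ℝ) : ℝ :=
  -√(ρ ^ 2 - (u - c) ^ 2) / u - arcsin ((u - c) / ρ)
    + c / √(c ^ 2 - ρ ^ 2) * arcsin ((c * u - (c ^ 2 - ρ ^ 2)) / (ρ * u))

section SqrtDivSq

variable {c ρ : ℝ}

lemma continuousOn_antiderivSqrtDivSq (hρ : 0 < ρ) (hρc : ρ < c) :
    ContinuousOn (antiderivSqrtDivSq c ρ) (Icc (c - ρ) (c + ρ)) := by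
  have hu : ∀ u ∈ Icc (c - ρ) (c + ρ), u ≠ 0 := fun u hu => by linarith [hu.1]
  unfold antiderivSqrtDivSq
  refine ((ContinuousOn.div (by fun_prop) continuousOn_id hu).sub (by fun_prop)).add
    (continuousOn_const.mul (continuous_arcsin.comp_continuousOn ?_))
  exact ContinuousOn.div (by fun_prop) (by fun_prop) fun u hu' => mul_ne_zero hρ.ne' (hu u hu')

lemma hasDerivAt_antiderivSqrtDivSq (hρ : 0 < ρ) (hρc : ρ < c) {u : ℝ}
    (hu : u ∈ Ioo (c - ρ) (c + ρ)) :
    HasDerivAt (antiderivSqrtDivSq c ρ) (√(ρ ^ 2 - (u - c) ^ 2) / u ^ 2) u := by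
  obtain ⟨hlo, hhi⟩ := hu
  have hu0 : 0 < u := by linarith
  set s := √(ρ ^ 2 - (u - c) ^ 2)
  set m := √(c ^ 2 - ρ ^ 2)
  have hs0 : 0 < ρ ^ 2 - (u - c) ^ 2 := by nlinarith
  have hm0 : 0 < c ^ 2 - ρ ^ 2 := by nlinarith
  have hs2 : s ^ 2 = ρ ^ 2 - (u - c) ^ 2 := sq_sqrt hs0.le
  have hm2 : m ^ 2 = c ^ 2 - ρ ^ 2 := sq_sqrt hm0.le
  have hspos : 0 < s := sqrt_pos.mpr hs0
  have hmpos : 0 < m := sqrt_pos.mpr hm0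
  have hρu : ρ * u ≠ 0 := by positivity
  have hsqrt : HasDerivAt (fun u => √(ρ ^ 2 - (u - c) ^ 2)) (-(u - c) / s) u :=
    ((((hasDerivAt_id' u).sub_const c).fun_pow 2).const_sub (ρ ^ 2)).sqrt hs0.ne'
      |>.congr_deriv (by field_simp; ring)
  have h₁ := hsqrt.fun_neg.fun_div (hasDerivAt_id' u) hu0.ne'
  have h₂ : HasDerivAt (fun u => arcsin ((u - c) / ρ)) (1 / s) u := by
    have hsq : √(1 - ((u - c) / ρ) ^ 2) = s / ρ := by
      rw [div_pow, one_sub_div (by positivity), sqrt_div' _ (by positivity), sqrt_sq hρ.le]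
    exact (((hasDerivAt_id' u).sub_const c).div_const ρ).arcsin_of_sqrt_eq hsq (by positivity)
      |>.congr_deriv (by field_simp)
  have h₃ : HasDerivAt (fun u => arcsin ((c * u - (c ^ 2 - ρ ^ 2)) / (ρ * u)))
      (m / (u * s)) u := by
    -- `ρ²u² - (cu - m²)² = m²(ρ² - (u - c)²)`
    have hsq : √(1 - ((c * u - (c ^ 2 - ρ ^ 2)) / (ρ * u)) ^ 2) = m * s / (ρ * u) := by
      rw [← sqrt_sq (by positivity : 0 ≤ m * s / (ρ * u))]
      congr 1
      field_simp
      linear_combination (-(m ^ 2)) * hs2 - (ρ ^ 2 - (u - c) ^ 2) * hm2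
    exact (((hasDerivAt_id' u).const_mul c).sub_const (c ^ 2 - ρ ^ 2)).fun_div
      ((hasDerivAt_id' u).const_mul ρ) hρu |>.arcsin_of_sqrt_eq hsq (by positivity)
      |>.congr_deriv (by rw [← hm2]; field_simp; ring)
  refine ((h₁.fun_sub h₂).fun_add (h₃.const_mul (c / m))).congr_deriv ?_
  field_simp
  ring

lemma intervalIntegrable_sqrt_sub_sq_div_sq (hρ : 0 ≤ ρ) (hρc : ρ < c) :
    IntervalIntegrable (fun u => √(ρ ^ 2 - (u - c) ^ 2) / u ^ 2) volume (c - ρ) (c + ρ) := by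
  refine ContinuousOn.intervalIntegrable ?_
  rw [uIcc_of_le (by linarith)]
  exact ContinuousOn.div (by fun_prop) (by fun_prop) fun u hu => by
    have : 0 < u := by linarith [hu.1]
    positivity

lemma integral_sqrt_sub_sq_div_sq (hρ : 0 < ρ) (hρc : ρ < c) :
    ∫ u in (c - ρ)..(c + ρ), √(ρ ^ 2 - (u - c) ^ 2) / u ^ 2 = π * (c / √(c ^ 2 - ρ ^ 2) - 1) := by
  rw [intervalIntegral.integral_eq_sub_of_hasDeriv_right_of_le (by linarith)
    (continuousOn_antiderivSqrtDivSq hρ hρc)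
    (fun u hu => (hasDerivAt_antiderivSqrtDivSq hρ hρc hu).hasDerivWithinAt)
    (intervalIntegrable_sqrt_sub_sq_div_sq hρ.le hρc)]
  have hne : c - ρ ≠ 0 := by linarith
  have hne' : c + ρ ≠ 0 := by linarith
  simp only [antiderivSqrtDivSq, add_sub_cancel_left, sub_sub_cancel_left, neg_sq, sub_self,
    sqrt_zero, neg_zero, zero_div, div_self hρ.ne', neg_div, zero_sub]
  rw [show (c * (c + ρ) - (c ^ 2 - ρ ^ 2)) / (ρ * (c + ρ)) = 1 by field_simp; ring,
    show (c * (c - ρ) - (c ^ 2 - ρ ^ 2)) / (ρ * (c - ρ)) = -1 by field_simp; ring,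
    arcsin_one, arcsin_neg_one]
  ring

lemma lintegral_ofReal_sqrt_sub_sq_div_sq (hρ : 0 < ρ) (hρc : ρ < c) :
    ∫⁻ u, ENNReal.ofReal (√(ρ ^ 2 - (u - c) ^ 2) / u ^ 2)
      = ENNReal.ofReal (π * (c / √(c ^ 2 - ρ ^ 2) - 1)) := by
  have hsupp : (fun u => ENNReal.ofReal (√(ρ ^ 2 - (u - c) ^ 2) / u ^ 2)).support
      ⊆ Ioc (c - ρ) (c + ρ) := by
    intro u hu
    have hpos : 0 < ρ ^ 2 - (u - c) ^ 2 := by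
      by_contra! h
      simp [Function.mem_support, sqrt_eq_zero'.mpr h] at hu
    constructor <;> nlinarith
  rw [← setLIntegral_eq_of_support_subset hsupp, ← integral_sqrt_sub_sq_div_sq hρ hρc,
    intervalIntegral.integral_of_le (by linarith), ofReal_integral_eq_lintegral_ofReal]
  · exact (intervalIntegrable_iff_integrableOn_Ioc_of_le (by linarith)).mp
      (intervalIntegrable_sqrt_sub_sq_div_sq hρ.le hρc)
  · exact ae_of_all _ fun u => by positivity

end SqrtDivSq

-- Also right for an empty slice, where the junk value `√(negative) = 0` gives `0`.
lemma volume_setOf_sq_add_sq_lt (x₀ y₀ ρ y : ℝ) :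
    volume {x : ℝ | (x - x₀) ^ 2 + (y - y₀) ^ 2 < ρ ^ 2}
      = ENNReal.ofReal (2 * √(ρ ^ 2 - (y - y₀) ^ 2)) := by
  have : {x : ℝ | (x - x₀) ^ 2 + (y - y₀) ^ 2 < ρ ^ 2}
      = Ioo (x₀ - √(ρ ^ 2 - (y - y₀) ^ 2)) (x₀ + √(ρ ^ 2 - (y - y₀) ^ 2)) := by
    ext x
    simp only [mem_ofPred_eq, mem_Ioo, ← lt_sub_iff_add_lt, Real.sq_lt]
    constructor <;> rintro ⟨h₁, h₂⟩ <;> constructor <;> linarith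
  rw [this, Real.volume_Ioo]
  ring_nf

lemma Complex.lintegral_ball_ofReal_inv_im_sq {c : ℂ} {ρ : ℝ} (hρ : 0 < ρ) (hρc : ρ < c.im) :
    ∫⁻ w in ball c ρ, ENNReal.ofReal (w.im ^ 2)⁻¹
      = ENNReal.ofReal (2 * π * (c.im / √(c.im ^ 2 - ρ ^ 2) - 1)) := by
  set g : ℂ → ENNReal := fun w => ENNReal.ofReal (w.im ^ 2)⁻¹
  have hslice : ∀ y : ℝ, ∫⁻ x, (ball c ρ).indicator g (Complex.measurableEquivRealProd.symm (x, y))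
      = ENNReal.ofReal 2 * ENNReal.ofReal (√(ρ ^ 2 - (y - c.im) ^ 2) / y ^ 2) := by
    intro y
    have hind : (fun x => (ball c ρ).indicator g (Complex.measurableEquivRealProd.symm (x, y)))
        = {x : ℝ | (x - c.re) ^ 2 + (y - c.im) ^ 2 < ρ ^ 2}.indicator
          fun _ => ENNReal.ofReal (y ^ 2)⁻¹ := by
      ext x
      simp only [indicator, mem_ball, Complex.dist_eq_re_im, sqrt_lt' hρ, mem_ofPred_eq,
        Complex.measurableEquivRealProd_symm_apply, g]
    rw [hind, lintegral_indicator_const (measurableSet_lt (by fun_prop) (by fun_prop)),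
      volume_setOf_sq_add_sq_lt, ← ENNReal.ofReal_mul (by positivity),
      ← ENNReal.ofReal_mul (by norm_num)]
    ring_nf
  have hmeas :
      Measurable fun q => (ball c ρ).indicator g (Complex.measurableEquivRealProd.symm q) :=
    (Measurable.indicator (by fun_prop) measurableSet_ball).comp (by fun_prop)
  rw [← lintegral_indicator measurableSet_ball,
    ← (Complex.volume_preserving_equiv_real_prod.symm).lintegral_comp_emb
      (MeasurableEquiv.measurableEmbedding _),
    Measure.volume_eq_prod, lintegral_prod_symm' _ hmeas,
    lintegral_congr hslice,
    lintegral_const_mul _ (by fun_prop), lintegral_ofReal_sqrt_sub_sq_div_sq hρ hρc,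
    ← ENNReal.ofReal_mul (by norm_num)]
  ring_nf

lemma UpperHalfPlane.volume_ball (z : UpperHalfPlane) {r : ℝ} (hr : 0 < r) :
    volume (ball z r) = ENNReal.ofReal (2 * π * (cosh r - 1)) := by
  have hdens : ∀ w : ℂ, ((1 / ‖w.im‖₊) ^ 2 : NNReal) = ENNReal.ofReal (w.im ^ 2)⁻¹ := by
    intro w
    rw [ENNReal.ofReal, ← sq_abs, ← inv_pow, Real.toNNReal_pow (by positivity),
      Real.toNNReal_inv, Real.toNNReal_abs, one_div]
    rfl
  have hz := z.im_pos
  have hsq : (z.im * cosh r) ^ 2 - (z.im * sinh r) ^ 2 = z.im ^ 2 := by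
    linear_combination z.im ^ 2 * cosh_sq_sub_sinh_sq r
  simp_rw [volume_eq_lintegral, image_coe_ball, hdens]
  rw [Complex.lintegral_ball_ofReal_inv_im_sq (by have := sinh_pos_iff.mpr hr; positivity)
    (by rw [coe_im, center_im]; exact mul_lt_mul_of_pos_left (sinh_lt_cosh r) hz),
    coe_im, center_im, hsq, sqrt_sq hz.le, mul_div_cancel_left₀ _ hz.ne']

lemma Finset.card_mul_le_measure_ball {X : Type*} [PseudoMetricSpace X] [MeasurableSpace X]
    [OpensMeasurableSpace X] (μ : Measure X) {F : Finset X} {z : X} {T r : ℝ} {v : ENNReal}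
    (hF : ↑F ⊆ closedBall z T) (hsep : ∀ p ∈ F, ∀ q ∈ F, p ≠ q → 2 * r ≤ dist p q)
    (hv : ∀ p ∈ F, v ≤ μ (ball p r)) :
    F.card * v ≤ μ (ball z (T + r)) := by
  have hdisj : (F : Set X).PairwiseDisjoint (ball · r) := fun p hp q hq hpq =>
    ball_disjoint_ball (by linarith [hsep p hp q hq hpq])
  calc F.card * v = ∑ _p ∈ F, v := by rw [sum_const, nsmul_eq_mul]
    _ ≤ ∑ p ∈ F, μ (ball p r) := sum_le_sum hv
    _ = μ (⋃ p ∈ F, ball p r) := (measure_biUnion_finset hdisj fun _ _ => measurableSet_ball).symm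
    _ ≤ μ (ball z (T + r)) := measure_mono <| iUnion₂_subset fun p hp =>
        ball_subset_ball' (by linarith [mem_closedBall.mp (hF hp)])

lemma Set.finite_and_ncard_le_of_forall_finset_card_le {α : Type*} {S : Set α} {N : ℝ}
    (h : ∀ F : Finset α, ↑F ⊆ S → (F.card : ℝ) ≤ N) : S.Finite ∧ (S.ncard : ℝ) ≤ N := by
  have hfin : S.Finite := by
    by_contra hinf
    obtain ⟨F, hFS, hF⟩ := Set.Infinite.exists_subset_card_eq hinf (⌊N⌋₊ + 1)
    have := h F hFS
    rw [hF, Nat.cast_add_one] at this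
    linarith [Nat.lt_floor_add_one N]
  refine ⟨hfin, ?_⟩
  simpa [Set.ncard_eq_toFinset_card S hfin] using h hfin.toFinset (by simp)

lemma cosh_add_half_log_three_sub_one_le {T : ℝ} (hT : 0 ≤ T) :
    cosh (T + log 3 / 2) - 1 ≤ 6 * exp T * (cosh (log 3 / 2) - 1) := by
  have hs : exp (log 3 / 2) = √3 := by rw [exp_half, exp_log (by norm_num)]
  have hs2 : √3 ^ 2 = 3 := sq_sqrt (by norm_num)
  have hslo : 1.7 ≤ √3 := by rw [le_sqrt (by norm_num) (by norm_num)]; norm_num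
  have hshi : √3 ≤ 1.74 := by rw [sqrt_le_left (by norm_num)]; norm_num
  have hE : 1 ≤ exp T := one_le_exp hT
  rw [cosh_eq, cosh_eq, exp_add, neg_add, exp_add, exp_neg, exp_neg, hs]
  field_simp
  nlinarith [mul_le_mul_of_nonneg_left hshi (by positivity : (0:ℝ) ≤ exp T ^ 2)]

/-- Packing estimate from the proof of Lemma 3.2: a set of points of the hyperbolic plane
(the upper half-plane with its hyperbolic metric) that is contained in the closed ball of
radius `T ≥ 0` around a point `z` and whose points are pairwise at distance at least
`log 3` is finite, with cardinality at most `6 · e^T`. -/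
theorem hyperbolic_packing_bound (z : UpperHalfPlane) (T : ℝ) (hT : 0 ≤ T)
    (S : Set UpperHalfPlane) (hS : S ⊆ Metric.closedBall z T)
    (hsep : ∀ x ∈ S, ∀ y ∈ S, x ≠ y → Real.log 3 ≤ dist x y) :
    S.Finite ∧ (S.ncard : ℝ) ≤ 6 * Real.exp T := by
  have hr : 0 < log 3 / 2 := half_pos (log_pos (by norm_num))
  refine Set.finite_and_ncard_le_of_forall_finset_card_le fun F hF => ?_
  have hpack := F.card_mul_le_measure_ball volume (hF.trans hS)
    (fun p hp q hq hpq => by linarith [hsep p (hF hp) q (hF hq) hpq])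
    (fun p _ => (UpperHalfPlane.volume_ball p hr).ge)
  rw [UpperHalfPlane.volume_ball z (by positivity), ← ENNReal.ofReal_natCast,
    ← ENNReal.ofReal_mul (by positivity),
    ENNReal.ofReal_le_ofReal_iff
      (mul_nonneg (by positivity) (sub_nonneg.mpr (one_le_cosh _)))] at hpack
  have hball : 0 < 2 * π * (cosh (log 3 / 2) - 1) :=
    mul_pos (by positivity) (sub_pos.mpr (one_lt_cosh.mpr hr.ne'))
  refine le_of_mul_le_mul_right (hpack.trans ?_) hball
  calc 2 * π * (cosh (T + log 3 / 2) - 1)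
      ≤ 2 * π * (6 * exp T * (cosh (log 3 / 2) - 1)) := by
        gcongr; exact cosh_add_half_log_three_sub_one_le hT
    _ = 6 * exp T * (2 * π * (cosh (log 3 / 2) - 1)) := by ring
end

section
/- Let (Ω, 𝓕, μ) be a probability space, let 𝓕₀ ≤ 𝓕₁ ≤ … ≤ 𝓕ₙ ≤ 𝓕 be an increasing sequence of sub-σ-algebras, let B₁, …, Bₙ be events with B_t measurable with respect to 𝓕_t for each t, and let p₁, …, pₙ ∈ [0,1] be such that the conditional expectation of the indicator of B_t given 𝓕_{t−1} is at most p_t almost everywhere, for each t. Then for every natural number k, the probability that at least k of the events B₁, …, Bₙ occur is at most (p₁ + … + pₙ)^k / k!. -/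
/-!
If at least `k` of the events occur, then all events `B t` with `t` in some `k`-element set `S`
occur. Conditioning on the σ-algebra just before the last time of `S` peels off a factor `p t`
at a time, so `μ (⋂ t ∈ S, B t) ≤ ∏ t ∈ S, p t`. The union bound over `S` leaves the elementary
symmetric polynomial `e_k(p)`, and `k! e_k(p) ≤ (∑ p)^k` because each `k`-subset accounts for `k!`
of the terms of the expansion of `(∑ p)^k`.
-/

open MeasureTheory Finset

namespace Multiset

variable {R : Type*} [CommSemiring R]

theorem esymm_cons_succ (a : R) (s : Multiset R) (k : ℕ) :
    (a ::ₘ s).esymm (k + 1) = s.esymm (k + 1) + a * s.esymm k := by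
  simp [esymm, powersetCard_cons, map_map, sum_map_mul_left]

theorem factorial_mul_esymm_le_sum_pow [LinearOrder R] [IsOrderedRing R] [ExistsAddOfLE R]
    {s : Multiset R} (hs : ∀ x ∈ s, 0 ≤ x) (k : ℕ) :
    (k.factorial : R) * s.esymm k ≤ s.sum ^ k := by
  induction s using Multiset.induction_on generalizing k with
  | empty => cases k <;> simp [esymm, powersetCard_zero_right]
  | cons a s ih =>
    have hs' : ∀ x ∈ s, 0 ≤ x := fun x hx => hs x (mem_cons_of_mem hx)
    have ha : 0 ≤ a := hs a (mem_cons_self a s)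
    have hsum : 0 ≤ s.sum := sum_nonneg hs'
    cases k with
    | zero => simp [esymm]
    | succ k =>
      calc ((k + 1).factorial : R) * (a ::ₘ s).esymm (k + 1)
          = (k + 1).factorial * s.esymm (k + 1) + (k + 1) * a * (k.factorial * s.esymm k) := by
            rw [esymm_cons_succ]; push_cast [Nat.factorial_succ]; ring
        _ ≤ s.sum ^ (k + 1) + (k + 1) * a * s.sum ^ k :=
            add_le_add (ih hs' _) (mul_le_mul_of_nonneg_left (ih hs' _)
              (mul_nonneg (add_nonneg k.cast_nonneg zero_le_one) ha))
        _ = s.sum ^ (k + 1) + ((k + 1 : ℕ) : R) * s.sum ^ (k + 1 - 1) * a := by push_cast; ring_nf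
        _ ≤ (s.sum + a) ^ (k + 1) :=
            pow_add_mul_le_add_pow hsum (add_nonneg (mul_nonneg zero_le_two hsum) ha) _
        _ = (a ::ₘ s).sum ^ (k + 1) := by rw [sum_cons, add_comm]

end Multiset

theorem Finset.factorial_mul_sum_powersetCard_prod_le_sum_pow {ι R : Type*} [CommSemiring R]
    [LinearOrder R] [IsOrderedRing R] [ExistsAddOfLE R] (s : Finset ι) {f : ι → R}
    (hf : ∀ i ∈ s, 0 ≤ f i) (k : ℕ) :
    (k.factorial : R) * ∑ S ∈ s.powersetCard k, ∏ i ∈ S, f i ≤ (∑ i ∈ s, f i) ^ k := by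
  rw [← esymm_map_val, sum_eq_multiset_sum]
  refine Multiset.factorial_mul_esymm_le_sum_pow (fun _ hx => ?_) k
  obtain ⟨i, hi, rfl⟩ := Multiset.mem_map.mp hx
  exact hf i hi

theorem setOf_natCast_le_sum_indicator_subset {Ω ι : Type*} (s : Finset ι) (B : ι → Set Ω)
    (k : ℕ) :
    {ω | (k : ℝ) ≤ ∑ t ∈ s, (B t).indicator (fun _ => (1 : ℝ)) ω} ⊆
      ⋃ S ∈ s.powersetCard k, ⋂ t ∈ S, B t := by
  classical
  intro ω hω
  have hk : k ≤ #{t ∈ s | ω ∈ B t} := by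
    simpa [Set.indicator_apply, ← natCast_card_filter] using hω
  obtain ⟨S, hS, rfl⟩ := exists_subset_card_eq hk
  simp only [Set.mem_iUnion, Set.mem_iInter, mem_powersetCard]
  exact ⟨S, ⟨hS.trans (filter_subset _ _), rfl⟩, fun t ht => (mem_filter.mp (hS ht)).2⟩

namespace MeasureTheory

variable {Ω : Type*} {m m₀ : MeasurableSpace Ω} {μ : Measure Ω}

theorem measureReal_inter_le_mul_of_condExp_indicator_le [IsFiniteMeasure μ] (hm : m ≤ m₀)
    {A B : Set Ω} (hA : MeasurableSet[m] A) (hB : MeasurableSet B) {c : ℝ}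
    (hc : ∀ᵐ ω ∂μ, μ[B.indicator (fun _ => (1 : ℝ)) | m] ω ≤ c) :
    μ.real (A ∩ B) ≤ μ.real A * c :=
  calc μ.real (A ∩ B) = ∫ ω in A, B.indicator (fun _ => (1 : ℝ)) ω ∂μ := by
        rw [setIntegral_indicator hB, setIntegral_const, smul_eq_mul, mul_one]
    _ = ∫ ω in A, μ[B.indicator (fun _ => (1 : ℝ)) | m] ω ∂μ :=
        (setIntegral_condExp hm ((integrable_const 1).indicator hB) hA).symm
    _ ≤ ∫ _ in A, c ∂μ :=
        setIntegral_mono_ae integrable_condExp.integrableOn (integrable_const c).integrableOn hc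
    _ = μ.real A * c := by rw [setIntegral_const, smul_eq_mul]

theorem measureReal_biInter_le_prod [IsProbabilityMeasure μ] (ℱ : Filtration ℕ m₀)
    {B : ℕ → Set Ω} {p : ℕ → ℝ} (S : Finset ℕ) (hB : ∀ t ∈ S, MeasurableSet[ℱ t] (B t))
    (hp : ∀ t ∈ S, 0 ≤ p t)
    (hcond : ∀ t ∈ S, ∀ᵐ ω ∂μ, μ[(B t).indicator (fun _ => (1 : ℝ)) | ℱ (t - 1)] ω ≤ p t) :
    μ.real (⋂ t ∈ S, B t) ≤ ∏ t ∈ S, p t := by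
  induction S using Finset.induction_on_max with
  | empty => simp
  | insert a s hlt ih =>
    have hpast : MeasurableSet[ℱ (a - 1)] (⋂ t ∈ s, B t) :=
      Finset.measurableSet_biInter s fun t ht =>
        ℱ.mono (by have := hlt t ht; omega) _ (hB t (mem_insert_of_mem ht))
    calc μ.real (⋂ t ∈ insert a s, B t) = μ.real ((⋂ t ∈ s, B t) ∩ B a) := by
          rw [set_biInter_insert, Set.inter_comm]
      _ ≤ μ.real (⋂ t ∈ s, B t) * p a :=
          measureReal_inter_le_mul_of_condExp_indicator_le (ℱ.le _) hpast
            (ℱ.le a _ (hB a (mem_insert_self a s))) (hcond a (mem_insert_self a s))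
      _ ≤ (∏ t ∈ s, p t) * p a := by
          gcongr
          · exact hp a (mem_insert_self a s)
          · exact ih (fun t ht => hB t (mem_insert_of_mem ht))
              (fun t ht => hp t (mem_insert_of_mem ht)) (fun t ht => hcond t (mem_insert_of_mem ht))
      _ = ∏ t ∈ insert a s, p t := by
          rw [prod_insert fun ha => (hlt a ha).false, mul_comm]

namespace Filtration

def ofMonotoneOnIic (𝓕 : ℕ → MeasurableSpace Ω) (n : ℕ) (hmono : MonotoneOn 𝓕 (Set.Iic n))
    (hle : 𝓕 n ≤ m) : Filtration ℕ m where
  seq i := 𝓕 (min i n)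
  mono' _ _ hij := hmono (Set.mem_Iic.2 (min_le_right _ _)) (Set.mem_Iic.2 (min_le_right _ _))
    (min_le_min_right n hij)
  le' _ := (hmono (Set.mem_Iic.2 (min_le_right _ _)) Set.self_mem_Iic (min_le_right _ _)).trans hle

theorem ofMonotoneOnIic_apply_of_le {𝓕 : ℕ → MeasurableSpace Ω} {n : ℕ}
    (hmono : MonotoneOn 𝓕 (Set.Iic n)) (hle : 𝓕 n ≤ m) {i : ℕ} (hi : i ≤ n) :
    ofMonotoneOnIic 𝓕 n hmono hle i = 𝓕 i := by
  simp [ofMonotoneOnIic, hi]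

end Filtration

end MeasureTheory

/-- Probabilistic estimate underlying the bad-step bounds: if `B 1, …, B n` are events
adapted to an increasing sequence of sub-σ-algebras `𝓕 0 ≤ 𝓕 1 ≤ … ≤ 𝓕 n` of a
probability space, and the conditional probability of `B t` given `𝓕 (t-1)` is a.e. at
most `p t ∈ [0,1]`, then the probability that at least `k` of the events occur is at most
`(p 1 + ⋯ + p n)^k / k!`. -/
theorem prob_at_least_k_events {Ω : Type*} [m : MeasurableSpace Ω]
    (μ : Measure Ω) [IsProbabilityMeasure μ] (n : ℕ)
    (𝓕 : ℕ → MeasurableSpace Ω)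
    (hmono : ∀ i : ℕ, i < n → 𝓕 i ≤ 𝓕 (i + 1)) (hle : 𝓕 n ≤ m)
    (B : ℕ → Set Ω) (hB : ∀ t ∈ Finset.Icc 1 n, MeasurableSet[𝓕 t] (B t))
    (p : ℕ → ℝ) (hp : ∀ t ∈ Finset.Icc 1 n, p t ∈ Set.Icc (0 : ℝ) 1)
    (hcond : ∀ t ∈ Finset.Icc 1 n,
      ∀ᵐ ω ∂μ, (μ[(B t).indicator (fun _ => (1 : ℝ)) | 𝓕 (t - 1)]) ω ≤ p t)
    (k : ℕ) :
    μ {ω | (k : ℝ) ≤ ∑ t ∈ Finset.Icc 1 n, (B t).indicator (fun _ => (1 : ℝ)) ω} ≤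
      ENNReal.ofReal ((∑ t ∈ Finset.Icc 1 n, p t) ^ k / k.factorial) := by
  have h𝓕 : MonotoneOn 𝓕 (Set.Iic n) :=
    monotoneOn_of_le_add_one Set.ordConnected_Iic fun i _ _ hi => hmono i hi
  have hnn : ∀ t ∈ Icc 1 n, 0 ≤ p t := fun t ht => (hp t ht).1
  have hprod : ∀ S ∈ (Icc 1 n).powersetCard k, μ.real (⋂ t ∈ S, B t) ≤ ∏ t ∈ S, p t := by
    intro S hS
    have hSn := (mem_powersetCard.mp hS).1
    refine measureReal_biInter_le_prod (Filtration.ofMonotoneOnIic 𝓕 n h𝓕 hle) S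
      (fun t ht => ?_) (fun t ht => hnn t (hSn ht)) (fun t ht => ?_)
    · rw [Filtration.ofMonotoneOnIic_apply_of_le h𝓕 hle (mem_Icc.mp (hSn ht)).2]
      exact hB t (hSn ht)
    · rw [Filtration.ofMonotoneOnIic_apply_of_le h𝓕 hle
        ((Nat.sub_le t 1).trans (mem_Icc.mp (hSn ht)).2)]
      exact hcond t (hSn ht)
  rw [ENNReal.le_ofReal_iff_toReal_le (measure_ne_top μ _)
    (div_nonneg (pow_nonneg (sum_nonneg hnn) k) (by positivity)), ← measureReal_def]
  calc μ.real {ω | (k : ℝ) ≤ ∑ t ∈ Icc 1 n, (B t).indicator (fun _ => (1 : ℝ)) ω}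
      ≤ μ.real (⋃ S ∈ (Icc 1 n).powersetCard k, ⋂ t ∈ S, B t) :=
        measureReal_mono (setOf_natCast_le_sum_indicator_subset _ _ _) (measure_ne_top μ _)
    _ ≤ ∑ S ∈ (Icc 1 n).powersetCard k, μ.real (⋂ t ∈ S, B t) := measureReal_biUnion_finset_le _ _
    _ ≤ ∑ S ∈ (Icc 1 n).powersetCard k, ∏ t ∈ S, p t := sum_le_sum hprod
    _ ≤ (∑ t ∈ Icc 1 n, p t) ^ k / k.factorial := by
        rw [le_div_iff₀ (by positivity), mul_comm]
        exact factorial_mul_sum_powersetCard_prod_le_sum_pow _ hnn k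
end
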